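/- arXiv:2301.11526 — 5 statements merged into one kernel-verified Lean document; each statement's English description precedes it below -/
import Mathlib

section
/- Let X be an m×m real matrix and Y an n×m real matrix, and set Z = X - Xᵀ + YᵀY. If I + Z is invertible, then the (m+n)×m matrix Q with top block (I+Z)⁻¹(I-Z) and bottom block -2Y(I+Z)⁻¹ satisfies QᵀQ = I. -/
open Matrix

theorem cayley_orthonormal_columns (m n : ℕ)
    (X : Matrix (Fin m) (Fin m) ℝ) (Y : Matrix (Fin n) (Fin m) ℝ)
    (Z : Matrix (Fin m) (Fin m) ℝ) (hZ : Z = X - Xᵀ + Yᵀ * Y)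
    (hinv : IsUnit (1 + Z))
    (Q : Matrix (Fin m ⊕ Fin n) (Fin m) ℝ)
    (hQ : Q = Matrix.fromRows ((1 + Z)⁻¹ * (1 - Z)) (-(2 • (Y * (1 + Z)⁻¹)))) :
    Qᵀ * Q = 1 := by
  have hd : IsUnit (1 + Z).det := (Matrix.isUnit_iff_isUnit_det _).mp hinv
  have h1 : (1 + Z) * (1 + Z)⁻¹ = 1 := Matrix.mul_nonsing_inv _ hd
  have h2 : (1 + Z)⁻¹ * (1 + Z) = 1 := Matrix.nonsing_inv_mul _ hd
  have hsym : Z + Zᵀ = Yᵀ * Y + Yᵀ * Y := by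
    subst hZ
    simp [Matrix.transpose_add, Matrix.transpose_sub, Matrix.transpose_mul]
    abel
  have hcomm : (1 + Z)⁻¹ * (1 - Z) = (1 - Z) * (1 + Z)⁻¹ := by
    have h3 : (1 - Z) * (1 + Z) = (1 + Z) * (1 - Z) := by noncomm_ring
    have h4 := congrArg (fun M => (1 + Z)⁻¹ * (M * (1 + Z)⁻¹)) h3
    simp only [Matrix.mul_assoc] at h4
    rw [h1, Matrix.mul_one, Matrix.nonsing_inv_mul_cancel_left _ _ hd] at h4
    exact h4
  have hti : ((1 + Z)⁻¹)ᵀ = (1 + Zᵀ)⁻¹ := by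
    rw [Matrix.transpose_nonsing_inv]
    simp [Matrix.transpose_add]
  have ht : ((1 + Z)⁻¹ * (1 - Z))ᵀ = (1 + Zᵀ)⁻¹ * (1 - Zᵀ) := by
    rw [hcomm, Matrix.transpose_mul, hti]
    simp [Matrix.transpose_sub]
  have hdt : IsUnit (1 + Zᵀ).det := by
    have : (1 + Zᵀ) = (1 + Z)ᵀ := by simp [Matrix.transpose_add]
    rw [this, Matrix.det_transpose]; exact hd
  have hkey : (1 - Zᵀ) * (1 - Z) + ((Yᵀ * Y + Yᵀ * Y) + (Yᵀ * Y + Yᵀ * Y))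
      = (1 + Zᵀ) * (1 + Z) := by
    rw [← hsym]; noncomm_ring
  subst hQ
  rw [two_nsmul]
  rw [Matrix.transpose_fromRows, Matrix.fromCols_mul_fromRows]
  have e1 : ((1 + Z)⁻¹ * (1 - Z))ᵀ * ((1 + Z)⁻¹ * (1 - Z))
      = (1 + Zᵀ)⁻¹ * ((1 - Zᵀ) * (1 - Z)) * (1 + Z)⁻¹ := by
    rw [ht, hcomm]
    simp only [Matrix.mul_assoc]
  have e2 : (-(Y * (1 + Z)⁻¹ + Y * (1 + Z)⁻¹))ᵀ * (-(Y * (1 + Z)⁻¹ + Y * (1 + Z)⁻¹))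
      = (1 + Zᵀ)⁻¹ * ((Yᵀ * Y + Yᵀ * Y) + (Yᵀ * Y + Yᵀ * Y)) * (1 + Z)⁻¹ := by
    rw [Matrix.transpose_neg, Matrix.transpose_add, Matrix.transpose_mul, hti]
    noncomm_ring
    simp [smul_mul_assoc, mul_smul_comm, smul_smul, Matrix.mul_assoc]
    noncomm_ring
  rw [e1, e2, ← Matrix.add_mul, ← Matrix.mul_add, hkey]
  rw [← Matrix.mul_assoc, Matrix.nonsing_inv_mul _ hdt, Matrix.one_mul, h1]
end

section
/- Suppose a function f : ℝ^{n₀} → ℝ^{m} factors as f(x) = Y σ(U x + b) + c where σ is elementwise slope-restricted in [0,1], and there exists a positive diagonal matrix Λ and γ > 0 such that the block matrix [[γI, -UᵀΛ, 0], [-ΛU, 2Λ, -Yᵀ], [0, -Y, γI]] is positive semidefinite. Then f is γ-Lipschitz: ‖f(x₁) - f(x₂)‖ ≤ γ‖x₁ - x₂‖ for all x₁, x₂. -/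
/-!
Write `Δx = x₁ - x₂`, `z = σ(U x₁ + b) - σ(U x₂ + b)` and `q = Y z = f x₁ - f x₂`. Evaluating the
quadratic form of the certificate matrix at `(Δx, z, q / γ)` gives
`0 ≤ γ ‖Δx‖² - 2 zᵀ Λ (U Δx - z) - ‖q‖² / γ`.
The slope restriction says `z_j (U Δx - z)_j ≥ 0` for every `j`, so with `Λ ≥ 0` the middle term is
nonpositive and `‖q‖² ≤ γ² ‖Δx‖²`.
-/

open Matrix

theorem EuclideanSpace.real_norm_sq_eq_dotProduct {ι : Type*} [Fintype ι]
    (x : EuclideanSpace ℝ ι) : ‖x‖ ^ 2 = x.ofLp ⬝ᵥ x.ofLp := by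
  rw [EuclideanSpace.real_norm_sq_eq]
  simp only [dotProduct, sq]

theorem mul_sub_sub_nonneg_of_slope_mem_Icc {σ : ℝ → ℝ}
    (hσ : ∀ u v : ℝ, u ≠ v → 0 ≤ (σ u - σ v) / (u - v) ∧ (σ u - σ v) / (u - v) ≤ 1) (u v : ℝ) :
    0 ≤ (σ u - σ v) * ((u - v) - (σ u - σ v)) := by
  rcases eq_or_ne u v with rfl | huv
  · simp
  obtain ⟨hs₀, hs₁⟩ := hσ u v huv
  have hincr : σ u - σ v = (σ u - σ v) / (u - v) * (u - v) :=
    (div_mul_cancel₀ _ (sub_ne_zero.mpr huv)).symm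
  rw [hincr]
  set s := (σ u - σ v) / (u - v)
  have : 0 ≤ s * (1 - s) * (u - v) ^ 2 :=
    mul_nonneg (mul_nonneg hs₀ (sub_nonneg.mpr hs₁)) (sq_nonneg _)
  linarith

theorem dotProduct_diagonal_mulVec_sub_nonneg {κ : Type*} [Fintype κ] [DecidableEq κ]
    {lam z p : κ → ℝ} (hlam : ∀ j, 0 ≤ lam j) (hzp : ∀ j, 0 ≤ z j * (p j - z j)) :
    0 ≤ z ⬝ᵥ diagonal lam *ᵥ (p - z) := by
  simp only [dotProduct, mulVec_diagonal, Pi.sub_apply]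
  exact Finset.sum_nonneg fun j _ => by
    rw [mul_left_comm]
    exact mul_nonneg (hlam j) (hzp j)

theorem sumElim_dotProduct_fromBlocks_mulVec_sumElim {ι κ α : Type*} [Fintype ι] [Fintype κ]
    [CommSemiring α] (A : Matrix ι ι α) (B : Matrix ι κ α) (C : Matrix κ ι α) (D : Matrix κ κ α)
    (u : ι → α) (v : κ → α) :
    (u ⊕ᵥ v) ⬝ᵥ fromBlocks A B C D *ᵥ (u ⊕ᵥ v) =
      u ⬝ᵥ A *ᵥ u + u ⬝ᵥ B *ᵥ v + (v ⬝ᵥ C *ᵥ u + v ⬝ᵥ D *ᵥ v) := by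
  simp only [fromBlocks_mulVec, Sum.elim_comp_inl, Sum.elim_comp_inr, sumElim_dotProduct_sumElim,
    dotProduct_add]

section Certificate

variable {ι κ μ : Type*} [Fintype ι] [Fintype κ] [Fintype μ] [DecidableEq ι] [DecidableEq κ]
  [DecidableEq μ]

/-- The LipSDP matrix `[[γI, -UᵀΛ, 0], [-ΛU, 2Λ, -Yᵀ], [0, -Y, γI]]` with `Λ = diagonal lam`. -/
def lipschitzCertificateMatrix (γ : ℝ) (lam : κ → ℝ) (U : Matrix κ ι ℝ) (Y : Matrix μ κ ℝ) :
    Matrix ((ι ⊕ κ) ⊕ μ) ((ι ⊕ κ) ⊕ μ) ℝ :=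
  fromBlocks
    (fromBlocks (γ • 1) (-(Uᵀ * diagonal lam)) (-(diagonal lam * U)) (2 • diagonal lam))
    (fromRows 0 (-Yᵀ)) (fromCols 0 (-Y)) (γ • 1)

theorem lipschitzCertificateMatrix_quadForm (γ : ℝ) (lam : κ → ℝ) (U : Matrix κ ι ℝ)
    (Y : Matrix μ κ ℝ) (x : ι → ℝ) (z : κ → ℝ) (w : μ → ℝ) :
    ((x ⊕ᵥ z) ⊕ᵥ w) ⬝ᵥ lipschitzCertificateMatrix γ lam U Y *ᵥ ((x ⊕ᵥ z) ⊕ᵥ w) =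
      γ * (x ⬝ᵥ x) - 2 * (z ⬝ᵥ diagonal lam *ᵥ (U *ᵥ x - z)) - 2 * (w ⬝ᵥ Y *ᵥ z) +
        γ * (w ⬝ᵥ w) := by
  have hcross : x ⬝ᵥ Uᵀ *ᵥ diagonal lam *ᵥ z = z ⬝ᵥ diagonal lam *ᵥ U *ᵥ x := by
    rw [dotProduct_mulVec, vecMul_transpose]
    simp only [dotProduct, mulVec_diagonal]
    exact Finset.sum_congr rfl fun _ _ => by ring
  have htranspose : z ⬝ᵥ Yᵀ *ᵥ w = w ⬝ᵥ Y *ᵥ z := by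
    rw [dotProduct_mulVec, vecMul_transpose, dotProduct_comm]
  rw [lipschitzCertificateMatrix, sumElim_dotProduct_fromBlocks_mulVec_sumElim,
    sumElim_dotProduct_fromBlocks_mulVec_sumElim]
  simp only [fromRows_mulVec, fromCols_mulVec_sumElim, sumElim_dotProduct_sumElim, zero_mulVec,
    neg_mulVec, smul_mulVec, one_mulVec, dotProduct_neg, dotProduct_smul, dotProduct_zero,
    zero_add, ← mulVec_mulVec, mulVec_sub, dotProduct_sub, hcross, htranspose]
  simp only [smul_eq_mul, nsmul_eq_mul, Nat.cast_ofNat]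
  ring

theorem dotProduct_mulVec_self_le_of_lipschitzCertificate {γ : ℝ} (hγ : 0 < γ) {lam : κ → ℝ}
    {U : Matrix κ ι ℝ} {Y : Matrix μ κ ℝ}
    (hpsd : (lipschitzCertificateMatrix γ lam U Y).PosSemidef) (x : ι → ℝ) (z : κ → ℝ)
    (hz : 0 ≤ z ⬝ᵥ diagonal lam *ᵥ (U *ᵥ x - z)) :
    (Y *ᵥ z) ⬝ᵥ (Y *ᵥ z) ≤ γ ^ 2 * (x ⬝ᵥ x) := by
  set q := Y *ᵥ z
  have hform := hpsd.dotProduct_mulVec_nonneg ((x ⊕ᵥ z) ⊕ᵥ γ⁻¹ • q)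
  rw [star_trivial, lipschitzCertificateMatrix_quadForm] at hform
  simp only [smul_dotProduct, dotProduct_smul, smul_eq_mul] at hform
  have hγq : γ * (γ⁻¹ * (γ⁻¹ * (q ⬝ᵥ q))) = γ⁻¹ * (q ⬝ᵥ q) := by field_simp
  have hq : γ⁻¹ * (q ⬝ᵥ q) ≤ γ * (x ⬝ᵥ x) := by linarith
  calc q ⬝ᵥ q = γ * (γ⁻¹ * (q ⬝ᵥ q)) := by field_simp
    _ ≤ γ * (γ * (x ⬝ᵥ x)) := mul_le_mul_of_nonneg_left hq hγ.le
    _ = γ ^ 2 * (x ⬝ᵥ x) := by ring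

end Certificate

theorem sdp_lipschitz_certificate (n₀ h m : ℕ) (σ : ℝ → ℝ)
    (hσ : ∀ u v : ℝ, u ≠ v → 0 ≤ (σ u - σ v) / (u - v) ∧ (σ u - σ v) / (u - v) ≤ 1)
    (U : Matrix (Fin h) (Fin n₀) ℝ) (Y : Matrix (Fin m) (Fin h) ℝ)
    (b : Fin h → ℝ) (c : Fin m → ℝ)
    (f : EuclideanSpace ℝ (Fin n₀) → EuclideanSpace ℝ (Fin m))
    (hf : ∀ x, f x = fun i => (Y.mulVec (fun j => σ (U.mulVec x j + b j)) i + c i))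
    (γ : ℝ) (hγ : 0 < γ) (lam : Fin h → ℝ) (hlam : ∀ i, 0 < lam i)
    (hpsd : (Matrix.fromBlocks
        (Matrix.fromBlocks (γ • (1 : Matrix (Fin n₀) (Fin n₀) ℝ))
          (-(Uᵀ * Matrix.diagonal lam)) (-(Matrix.diagonal lam * U))
          (2 • Matrix.diagonal lam))
        (Matrix.fromRows (0 : Matrix (Fin n₀) (Fin m) ℝ) (-Yᵀ))
        (Matrix.fromCols (0 : Matrix (Fin m) (Fin n₀) ℝ) (-Y))
        (γ • (1 : Matrix (Fin m) (Fin m) ℝ))).PosSemidef) :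
    ∀ x₁ x₂ : EuclideanSpace ℝ (Fin n₀), ‖f x₁ - f x₂‖ ≤ γ * ‖x₁ - x₂‖ := by
  intro x₁ x₂
  set a := U *ᵥ x₁.ofLp + b
  set a' := U *ᵥ x₂.ofLp + b
  set z : Fin h → ℝ := fun j => σ (a j) - σ (a' j)
  have hdiff : (f x₁ - f x₂).ofLp = Y *ᵥ z := by
    have hz : z = (fun j => σ (a j)) - fun j => σ (a' j) := rfl
    rw [WithLp.ofLp_sub, hf, hf, hz, mulVec_sub]
    ext i
    simp [a, a']
  have hslope : 0 ≤ z ⬝ᵥ diagonal lam *ᵥ (U *ᵥ (x₁ - x₂).ofLp - z) := by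
    refine dotProduct_diagonal_mulVec_sub_nonneg (fun j => (hlam j).le) fun j => ?_
    have hpre : (U *ᵥ (x₁ - x₂).ofLp) j = a j - a' j := by
      simp [a, a', WithLp.ofLp_sub, mulVec_sub]
    rw [hpre]
    exact mul_sub_sub_nonneg_of_slope_mem_Icc hσ (a j) (a' j)
  have hsq := dotProduct_mulVec_self_le_of_lipschitzCertificate hγ hpsd _ _ hslope
  rw [← hdiff, ← EuclideanSpace.real_norm_sq_eq_dotProduct,
    ← EuclideanSpace.real_norm_sq_eq_dotProduct, ← mul_pow] at hsq
  exact le_of_sq_le_sq hsq (by positivity)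
end

section
/- Let Ψ be a diagonal matrix with strictly positive diagonal entries, and let A ∈ ℝ^{q×q}, B ∈ ℝ^{q×p} satisfy AAᵀ + BBᵀ = I. Let σ : ℝ → ℝ be elementwise slope-restricted in [0,1]. Then the sandwich layer h ↦ √2 Aᵀ Ψ σ(√2 Ψ⁻¹ B h + b) is 1-Lipschitz in the Euclidean norm. -/
open Matrix

theorem sandwich_layer_one_lipschitz (p q : ℕ) (σ : ℝ → ℝ)
    (hσ : ∀ u v : ℝ, u ≠ v → 0 ≤ (σ u - σ v) / (u - v) ∧ (σ u - σ v) / (u - v) ≤ 1)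
    (ψ : Fin q → ℝ) (hψ : ∀ i, 0 < ψ i)
    (A : Matrix (Fin q) (Fin q) ℝ) (B : Matrix (Fin q) (Fin p) ℝ)
    (hAB : A * Aᵀ + B * Bᵀ = 1) (b : Fin q → ℝ)
    (s : EuclideanSpace ℝ (Fin p) → EuclideanSpace ℝ (Fin q))
    (hs : ∀ x, s x = fun i =>
      (Real.sqrt 2 • (Aᵀ * Matrix.diagonal ψ)).mulVec
        (fun j => σ ((Real.sqrt 2 • ((Matrix.diagonal ψ)⁻¹ * B)).mulVec x j + b j)) i) :
    ∀ x₁ x₂ : EuclideanSpace ℝ (Fin p), ‖s x₁ - s x₂‖ ≤ ‖x₁ - x₂‖ := by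
  intro x₁ x₂
  have h2 : Real.sqrt 2 * Real.sqrt 2 = 2 := Real.mul_self_sqrt (by norm_num)
  have hψne : ∀ j, ψ j ≠ 0 := fun j => (hψ j).ne'
  have hinv : (Matrix.diagonal ψ)⁻¹ = Matrix.diagonal (fun j => (ψ j)⁻¹) := by
    apply Matrix.inv_eq_right_inv
    rw [Matrix.diagonal_mul_diagonal]
    have : (fun i => ψ i * (ψ i)⁻¹) = fun _ => (1 : ℝ) :=
      funext fun i => mul_inv_cancel₀ (hψne i)
    rw [this, Matrix.diagonal_one]
  set U : (Fin p → ℝ) → Fin q → ℝ :=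
    fun x j => Real.sqrt 2 * ((ψ j)⁻¹ * (B *ᵥ x) j) + b j with hUdef
  have hU : ∀ (x : EuclideanSpace ℝ (Fin p)) (j : Fin q),
      (Real.sqrt 2 • ((Matrix.diagonal ψ)⁻¹ * B)).mulVec x j + b j = U x j := by
    intro x j
    rw [hinv, Matrix.smul_mulVec, ← Matrix.mulVec_mulVec, Pi.smul_apply,
      smul_eq_mul, Matrix.mulVec_diagonal]
  set z : Fin q → ℝ := fun j => σ (U x₁ j) - σ (U x₂ j) with hzdef
  set g : Fin q → ℝ := fun j => ψ j * z j with hgdef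
  set v : Fin p → ℝ := fun i => x₁ i - x₂ i with hvdef
  -- expression of s as √2 Aᵀ (ψ ⬝ σ(U x))
  have e1 : ∀ x : EuclideanSpace ℝ (Fin p),
      s x = fun i => Real.sqrt 2 * (Aᵀ *ᵥ (fun j => ψ j * σ (U x j))) i := by
    intro x
    rw [hs x]
    funext i
    rw [Matrix.smul_mulVec, Pi.smul_apply, smul_eq_mul, ← Matrix.mulVec_mulVec]
    have hd : (Matrix.diagonal ψ *ᵥ (fun j =>
        σ ((Real.sqrt 2 • ((Matrix.diagonal ψ)⁻¹ * B)).mulVec x j + b j)))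
        = fun j => ψ j * σ (U x j) := by
      funext j
      rw [Matrix.mulVec_diagonal, hU x j]
    rw [hd]
  -- difference of layer outputs
  have hw : ∀ i, s x₁ i - s x₂ i = Real.sqrt 2 * (Aᵀ *ᵥ g) i := by
    intro i
    rw [e1 x₁, e1 x₂]
    have hvec : (fun j => ψ j * σ (U x₁ j)) - (fun j => ψ j * σ (U x₂ j)) = g := by
      funext j
      simp only [Pi.sub_apply, hgdef, hzdef, mul_sub]
    rw [show Real.sqrt 2 * (Aᵀ *ᵥ (fun j => ψ j * σ (U x₁ j))) i -
          Real.sqrt 2 * (Aᵀ *ᵥ (fun j => ψ j * σ (U x₂ j))) i =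
          Real.sqrt 2 * ((Aᵀ *ᵥ (fun j => ψ j * σ (U x₁ j))) i -
            (Aᵀ *ᵥ (fun j => ψ j * σ (U x₂ j))) i) from by ring,
        ← Pi.sub_apply (Aᵀ *ᵥ (fun j => ψ j * σ (U x₁ j)))
          (Aᵀ *ᵥ (fun j => ψ j * σ (U x₂ j))),
        ← Matrix.mulVec_sub, hvec]
  -- relation between U differences and B v
  have hcz : ∀ j, U x₁ j - U x₂ j = Real.sqrt 2 * ((ψ j)⁻¹ * (B *ᵥ v) j) := by
    intro j
    have hBv : (B *ᵥ x₁) j - (B *ᵥ x₂) j = (B *ᵥ v) j := by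
      simp [hvdef, Matrix.mulVec, dotProduct, mul_sub, Finset.sum_sub_distrib]
    simp only [hUdef]
    linear_combination (Real.sqrt 2 * (ψ j)⁻¹) * hBv
  -- slope restriction key inequality, termwise
  have hkey : ∀ j, g j * g j ≤ Real.sqrt 2 * (g j * (B *ᵥ v) j) := by
    intro j
    by_cases h : U x₁ j = U x₂ j
    · have hz0 : z j = 0 := by simp [hzdef, h]
      simp [hgdef, hz0]
    · obtain ⟨h0, h1⟩ := hσ _ _ h
      have hd : U x₁ j - U x₂ j ≠ 0 := sub_ne_zero.mpr h
      set lam : ℝ := (σ (U x₁ j) - σ (U x₂ j)) / (U x₁ j - U x₂ j) with hlam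
      have hzval : z j = lam * (U x₁ j - U x₂ j) := by
        rw [hzdef, hlam]
        field_simp
      have hcval : Real.sqrt 2 * (B *ᵥ v) j = (U x₁ j - U x₂ j) * ψ j := by
        rw [hcz j]
        field_simp [hψne j]
      have hl : 0 ≤ lam * (1 - lam) := mul_nonneg h0 (by linarith)
      simp only [hgdef, hzval]
      calc ψ j * (lam * (U x₁ j - U x₂ j)) * (ψ j * (lam * (U x₁ j - U x₂ j)))
          = lam * lam * ((ψ j * (U x₁ j - U x₂ j)) * (ψ j * (U x₁ j - U x₂ j))) := by ring
        _ ≤ lam * ((ψ j * (U x₁ j - U x₂ j)) * (ψ j * (U x₁ j - U x₂ j))) := by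
            nlinarith [mul_nonneg hl (mul_self_nonneg (ψ j * (U x₁ j - U x₂ j)))]
        _ = Real.sqrt 2 * (ψ j * (lam * (U x₁ j - U x₂ j)) * (B *ᵥ v) j) := by
            linear_combination (-(lam * ψ j * (U x₁ j - U x₂ j))) * hcval
  -- summed version
  have hsum1 : g ⬝ᵥ g ≤ Real.sqrt 2 * ((Bᵀ *ᵥ g) ⬝ᵥ v) := by
    have : g ⬝ᵥ (B *ᵥ v) = (Bᵀ *ᵥ g) ⬝ᵥ v := by
      rw [Matrix.dotProduct_mulVec, Matrix.mulVec_transpose]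
    rw [← this, dotProduct, dotProduct, Finset.mul_sum]
    exact Finset.sum_le_sum fun j _ => hkey j
  -- matrix identity from AAᵀ + BBᵀ = 1
  have hAA : (Aᵀ *ᵥ g) ⬝ᵥ (Aᵀ *ᵥ g) = g ⬝ᵥ g - (Bᵀ *ᵥ g) ⬝ᵥ (Bᵀ *ᵥ g) := by
    have hAB' : A * Aᵀ = 1 - B * Bᵀ := by
      rw [← hAB, add_sub_cancel_right]
    rw [Matrix.dotProduct_mulVec, Matrix.vecMul_transpose, Matrix.mulVec_mulVec, hAB',
      Matrix.sub_mulVec, sub_dotProduct, Matrix.one_mulVec]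
    congr 1
    rw [← Matrix.mulVec_mulVec, dotProduct_comm, Matrix.dotProduct_mulVec,
      Matrix.mulVec_transpose, ← Matrix.mulVec_transpose]
  -- squared-norm inequality
  have hnormsq : ∑ i, (s x₁ i - s x₂ i) ^ 2 ≤ ∑ i, v i ^ 2 := by
    have e2 : ∑ i, (s x₁ i - s x₂ i) ^ 2 = 2 * ((Aᵀ *ᵥ g) ⬝ᵥ (Aᵀ *ᵥ g)) := by
      simp only [hw]
      rw [dotProduct, Finset.mul_sum]
      exact Finset.sum_congr rfl fun i _ => by
        linear_combination ((Aᵀ *ᵥ g) i * (Aᵀ *ᵥ g) i) * h2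
    have hvv : v ⬝ᵥ v = ∑ i, v i ^ 2 := by
      simp [dotProduct, sq]
    have hexp : ∑ i, (v i - Real.sqrt 2 * (Bᵀ *ᵥ g) i) ^ 2 =
        v ⬝ᵥ v - 2 * Real.sqrt 2 * ((Bᵀ *ᵥ g) ⬝ᵥ v) +
          2 * ((Bᵀ *ᵥ g) ⬝ᵥ (Bᵀ *ᵥ g)) := by
      simp only [dotProduct, Finset.mul_sum, ← Finset.sum_sub_distrib,
        ← Finset.sum_add_distrib]
      exact Finset.sum_congr rfl fun i _ => by
        linear_combination ((Bᵀ *ᵥ g) i * (Bᵀ *ᵥ g) i) * h2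
    have hpos : 0 ≤ ∑ i, (v i - Real.sqrt 2 * (Bᵀ *ᵥ g) i) ^ 2 :=
      Finset.sum_nonneg fun i _ => sq_nonneg _
    rw [hexp] at hpos
    rw [e2, hAA, ← hvv]
    linarith
  -- conclude via Euclidean norms
  rw [EuclideanSpace.norm_eq, EuclideanSpace.norm_eq]
  apply Real.sqrt_le_sqrt
  simp only [PiLp.sub_apply, Real.norm_eq_abs, sq_abs]
  simpa only [hvdef] using hnormsq
end

section
/- Let H₀ = [[γI, -√(2γ) B₀ᵀΨ₀], [-√(2γ)Ψ₀B₀, 2Ψ₀(I - A₀A₀ᵀ)Ψ₀]] where γ > 0, Ψ₀ is positive diagonal, and A₀A₀ᵀ + B₀B₀ᵀ = I. Then H₀ is positive semidefinite. -/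
open Matrix

theorem H0_posSemidef (n m : ℕ) (γ : ℝ) (hγ : 0 < γ)
    (ψ : Fin n → ℝ) (hψ : ∀ i, 0 < ψ i)
    (A₀ : Matrix (Fin n) (Fin n) ℝ) (B₀ : Matrix (Fin n) (Fin m) ℝ)
    (hAB : A₀ * A₀ᵀ + B₀ * B₀ᵀ = 1) :
    (Matrix.fromBlocks (γ • (1 : Matrix (Fin m) (Fin m) ℝ))
      (-(Real.sqrt (2 * γ) • (B₀ᵀ * Matrix.diagonal ψ)))
      (-(Real.sqrt (2 * γ) • (Matrix.diagonal ψ * B₀)))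
      (2 • (Matrix.diagonal ψ * (1 - A₀ * A₀ᵀ) * Matrix.diagonal ψ))).PosSemidef := by
  have hB : (1 : Matrix (Fin n) (Fin n) ℝ) - A₀ * A₀ᵀ = B₀ * B₀ᵀ := by
    rw [← hAB]; abel
  set D := Matrix.diagonal ψ with hD
  have hDt : Dᵀ = D := Matrix.diagonal_transpose ψ
  set L : Matrix (Fin m ⊕ Fin n) (Fin m ⊕ Fin n) ℝ :=
    Matrix.fromBlocks (Real.sqrt γ • 1) (-(Real.sqrt 2 • (B₀ᵀ * D))) 0 0 with hL
  have hsg : Real.sqrt γ * Real.sqrt γ = γ := Real.mul_self_sqrt hγ.le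
  have hs2 : Real.sqrt 2 * Real.sqrt 2 = 2 := Real.mul_self_sqrt (by norm_num)
  have hs2g : Real.sqrt (2 * γ) = Real.sqrt 2 * Real.sqrt γ :=
    Real.sqrt_mul (by norm_num) γ
  have key : (Matrix.fromBlocks (γ • (1 : Matrix (Fin m) (Fin m) ℝ))
      (-(Real.sqrt (2 * γ) • (B₀ᵀ * D)))
      (-(Real.sqrt (2 * γ) • (D * B₀)))
      (2 • (D * (1 - A₀ * A₀ᵀ) * D))) = Lᴴ * L := by
    rw [hL, hB]
    rw [Matrix.fromBlocks_conjTranspose, Matrix.fromBlocks_multiply]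
    congr 1 <;>
      simp [Matrix.conjTranspose_smul, Matrix.smul_mul, Matrix.mul_smul, smul_smul, hsg,
        hs2g, hDt, Matrix.transpose_mul]
    · rw [mul_comm]
    · rw [two_mul, two_smul]
      simp [Matrix.mul_assoc]
  rw [key]
  exact Matrix.posSemidef_conjTranspose_mul_self L
end

section
/- Let Ψ be a positive diagonal q×q matrix and let Y = √2 AᵀΨ, U = √2 Ψ⁻¹B where AAᵀ + BBᵀ = I. Then 2Ψ² - YᵀY - Ψ²UUᵀΨ² = 0, and consequently the block matrix [[I, -UᵀΨ², 0], [-Ψ²U, 2Ψ², -Yᵀ], [0, -Y, I]] is positive semidefinite. -/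
/-! With Ψ symmetric and invertible, `Yᵀ Y = 2 Ψ A Aᵀ Ψ` and `Ψ² U Uᵀ Ψ² = 2 Ψ B Bᵀ Ψ`, whose sum is
`2 Ψ (A Aᵀ + B Bᵀ) Ψ = 2 Ψ²`. Given this identity, the block matrix is the Gram matrix `Lᵀ L` of
`L = [[1, -Uᵀ Ψ², 0], [0, -Y, 1]]`, which replaces the two Schur complement steps. -/

open Matrix

section Sandwich

variable {n l p R : Type*} [Fintype n] [Fintype l] [Fintype p] [CommRing R]

theorem transpose_smul_mul_self (s : R) (A : Matrix n l R) (Ψ : Matrix n n R) :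
    (s • (Aᵀ * Ψ))ᵀ * (s • (Aᵀ * Ψ)) = (s * s) • (Ψᵀ * (A * Aᵀ) * Ψ) := by
  simp only [transpose_smul, transpose_mul, transpose_transpose, Matrix.smul_mul,
    Matrix.mul_smul, smul_smul, Matrix.mul_assoc]

theorem mul_self_mul_mul_transpose_mul_mul_self [DecidableEq n] (s : R) (B : Matrix n p R)
    {Ψ : Matrix n n R}
    (hΨ : Ψᵀ = Ψ) (hdet : IsUnit Ψ.det) :
    (Ψ * Ψ) * ((s • (Ψ⁻¹ * B)) * (s • (Ψ⁻¹ * B))ᵀ) * (Ψ * Ψ) =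
      (s * s) • (Ψ * (B * Bᵀ) * Ψ) := by
  simp only [transpose_smul, transpose_mul, transpose_nonsing_inv, hΨ, Matrix.smul_mul,
    Matrix.mul_smul, smul_smul]
  congr 1
  calc Ψ * Ψ * (Ψ⁻¹ * B * (Bᵀ * Ψ⁻¹)) * (Ψ * Ψ)
      = Ψ * (Ψ * Ψ⁻¹) * (B * Bᵀ) * (Ψ⁻¹ * Ψ) * Ψ := by simp only [Matrix.mul_assoc]
    _ = Ψ * (B * Bᵀ) * Ψ := by
      rw [mul_nonsing_inv _ hdet, nonsing_inv_mul _ hdet, Matrix.mul_one, Matrix.mul_one]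

theorem sandwich_eq_smul_mul_self [DecidableEq n] (s : R) (A : Matrix n l R) (B : Matrix n p R)
    (hAB : A * Aᵀ + B * Bᵀ = 1) {Ψ : Matrix n n R} (hΨ : Ψᵀ = Ψ) (hdet : IsUnit Ψ.det) :
    (s • (Aᵀ * Ψ))ᵀ * (s • (Aᵀ * Ψ)) +
        (Ψ * Ψ) * ((s • (Ψ⁻¹ * B)) * (s • (Ψ⁻¹ * B))ᵀ) * (Ψ * Ψ) =
      (s * s) • (Ψ * Ψ) := by
  rw [transpose_smul_mul_self, mul_self_mul_mul_transpose_mul_mul_self s B hΨ hdet, hΨ,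
    ← smul_add, ← Matrix.add_mul, ← Matrix.mul_add, hAB, Matrix.mul_one]

end Sandwich

section GramMatrix

variable {m n k R : Type*} [Fintype m] [Fintype k] [DecidableEq m] [DecidableEq k]
  [Ring R] [StarRing R]

theorem fromBlocks_eq_conjTranspose_mul_self (V : Matrix m n R) (Y : Matrix k n R) :
    fromBlocks (fromBlocks 1 (-V) (-Vᴴ) (Vᴴ * V + Yᴴ * Y)) (fromRows 0 (-Yᴴ))
        (fromCols 0 (-Y)) (1 : Matrix k k R) =
      (fromCols (fromBlocks 1 (-V) 0 (-Y)) (fromRows 0 1))ᴴ *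
        fromCols (fromBlocks 1 (-V) 0 (-Y)) (fromRows (0 : Matrix m k R) 1) := by
  rw [conjTranspose_fromCols_eq_fromRows_conjTranspose, fromRows_mul_fromCols]
  simp [fromBlocks_conjTranspose, conjTranspose_fromRows_eq_fromCols_conjTranspose,
    fromBlocks_multiply, fromBlocks_mul_fromRows, fromCols_mul_fromBlocks, fromCols_mul_fromRows]

theorem posSemidef_fromBlocks_one_neg [Fintype n] [PartialOrder R] [StarOrderedRing R]
    (V : Matrix m n R) (Y : Matrix k n R) :
    (fromBlocks (fromBlocks 1 (-V) (-Vᴴ) (Vᴴ * V + Yᴴ * Y)) (fromRows 0 (-Yᴴ))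
        (fromCols 0 (-Y)) (1 : Matrix k k R)).PosSemidef := by
  rw [fromBlocks_eq_conjTranspose_mul_self]
  exact posSemidef_conjTranspose_mul_self _

end GramMatrix

theorem sandwich_identity_and_psd (q p : ℕ)
    (ψ : Fin q → ℝ) (hψ : ∀ i, 0 < ψ i)
    (A : Matrix (Fin q) (Fin q) ℝ) (B : Matrix (Fin q) (Fin p) ℝ)
    (hAB : A * Aᵀ + B * Bᵀ = 1)
    (Ψ : Matrix (Fin q) (Fin q) ℝ) (hΨ : Ψ = Matrix.diagonal ψ)
    (Y : Matrix (Fin q) (Fin q) ℝ) (hY : Y = Real.sqrt 2 • (Aᵀ * Ψ))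
    (U : Matrix (Fin q) (Fin p) ℝ) (hU : U = Real.sqrt 2 • (Ψ⁻¹ * B)) :
    2 • (Ψ * Ψ) - Yᵀ * Y - (Ψ * Ψ) * (U * Uᵀ) * (Ψ * Ψ) = 0 ∧
    (Matrix.fromBlocks
      (Matrix.fromBlocks (1 : Matrix (Fin p) (Fin p) ℝ) (-(Uᵀ * (Ψ * Ψ)))
        (-((Ψ * Ψ) * U)) (2 • (Ψ * Ψ)))
      (Matrix.fromRows (0 : Matrix (Fin p) (Fin q) ℝ) (-Yᵀ))
      (Matrix.fromCols (0 : Matrix (Fin q) (Fin p) ℝ) (-Y))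
      (1 : Matrix (Fin q) (Fin q) ℝ)).PosSemidef := by
  have hΨT : Ψᵀ = Ψ := hΨ ▸ diagonal_transpose ψ
  have hdet : IsUnit Ψ.det := by
    rw [hΨ, det_diagonal, isUnit_iff_ne_zero]
    exact Finset.prod_ne_zero_iff.mpr fun i _ => (hψ i).ne'
  have hsandwich : Yᵀ * Y + (Ψ * Ψ) * (U * Uᵀ) * (Ψ * Ψ) = 2 • (Ψ * Ψ) := by
    rw [hY, hU, sandwich_eq_smul_mul_self _ A B hAB hΨT hdet,
      Real.mul_self_sqrt zero_le_two, two_smul, two_nsmul]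
  refine ⟨by rw [sub_sub, hsandwich, sub_self], ?_⟩
  have hV : (Uᵀ * (Ψ * Ψ))ᴴ = (Ψ * Ψ) * U := by
    rw [conjTranspose_eq_transpose_of_trivial, transpose_mul, transpose_mul, hΨT,
      transpose_transpose]
  have hgram : (Uᵀ * (Ψ * Ψ))ᴴ * (Uᵀ * (Ψ * Ψ)) + Yᴴ * Y = 2 • (Ψ * Ψ) := by
    rw [hV, conjTranspose_eq_transpose_of_trivial, ← hsandwich, add_comm]
    simp only [Matrix.mul_assoc]
  have hpsd := posSemidef_fromBlocks_one_neg (Uᵀ * (Ψ * Ψ)) Y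
  rwa [hgram, hV, conjTranspose_eq_transpose_of_trivial] at hpsd
end
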